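/- For every positive integer d and every k with 1 ≤ k ≤ d, each γ ∈ Λ_{d,[k]} satisfies: either br(γ) = 0, or k + 1 ≤ br(γ) ≤ d. -/

import Mathlib

open scoped Classical

noncomputable section

/-- A (pre-)tree: a finite set of natural-number labelled vertices, a root,
a parent function and a weight function.  Well-formedness is the predicate
`IsTree` below. -/
structure PreTree where
  verts : Finset ℕ
  root : ℕ
  parent : ℕ → ℕ
  wt : ℕ → ℕ

namespace PreTree

/-- `t.Anc u v` means `u ⪯ v` : `u` lies on the (parent-)path from the root to `v`. -/
def Anc (t : PreTree) (u v : ℕ) : Prop := ∃ n : ℕ, t.parent^[n] v = u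

/-- strict ancestor `u ≺ v`. -/
def SAnc (t : PreTree) (u v : ℕ) : Prop := t.Anc u v ∧ u ≠ v

/-- `t` is an honest finite rooted tree: the root is a vertex, vertices are closed
under `parent`, the root is a fixed point of `parent`, and every vertex descends
from the root. -/
def IsTree (t : PreTree) : Prop :=
  t.root ∈ t.verts ∧ (∀ v ∈ t.verts, t.parent v ∈ t.verts) ∧
    t.parent t.root = t.root ∧ ∀ v ∈ t.verts, t.Anc t.root v

/-- The direct descendants (children) of a vertex. -/
def children (t : PreTree) (u : ℕ) : Finset ℕ :=
  t.verts.filter fun x => t.parent x = u ∧ x ≠ u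

/-- A vertex is terminal iff it has no (direct) descendants. -/
def Terminal (t : PreTree) (v : ℕ) : Prop := t.children v = ∅

/-- Terminally weighted: a vertex has positive weight iff it is terminal. -/
def TerminallyWeighted (t : PreTree) : Prop :=
  ∀ v ∈ t.verts, (0 < t.wt v ↔ t.children v = ∅)

/-- The total weight of a weighted tree. -/
def totalWeight (t : PreTree) : ℕ := ∑ v ∈ t.verts, t.wt v

/-- Stable: every ghost non-root vertex has at least three edges attached to it,
i.e. at least two children. -/
def Stable (t : PreTree) : Prop :=
  ∀ v ∈ t.verts, v ≠ t.root → t.wt v = 0 → 2 ≤ (t.children v).card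

/-- Semistable: every ghost non-root vertex has at least two edges attached to it,
i.e. at least one child. -/
def Semistable (t : PreTree) : Prop :=
  ∀ v ∈ t.verts, v ≠ t.root → t.wt v = 0 → 1 ≤ (t.children v).card

/-- `b` is the last vertex `v_r` of the trunk: every strict ancestor of `b` has
exactly one child while `b` does not. -/
def IsTrunkEnd (t : PreTree) (b : ℕ) : Prop :=
  b ∈ t.verts ∧ (t.children b).card ≠ 1 ∧ ∀ p, t.SAnc p b → (t.children p).card = 1

/-- The number of branches: the number of children of the trunk end (`0` for a
path tree).  For an honest tree the trunk end is unique, so the sum below has at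
most one nonzero term. -/
def br (t : PreTree) : ℕ :=
  ∑ b ∈ t.verts.filter (fun b => t.IsTrunkEnd b), (t.children b).card

/-- `b` is the branch vertex: the trunk end, provided it has at least two children. -/
def IsBranchVertex (t : PreTree) (b : ℕ) : Prop :=
  t.IsTrunkEnd b ∧ 2 ≤ (t.children b).card

/-- The subtree of `t` rooted at `v` (with the inherited weights). -/
def subtreeAt (t : PreTree) (v : ℕ) : PreTree where
  verts := t.verts.filter fun u => t.Anc v u
  root := v
  parent := fun u => if u = v then v else t.parent u
  wt := t.wt

/-- Simple: every branch (subtree rooted at a child of the branch vertex) is stable. -/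
def Simple (t : PreTree) : Prop :=
  ∀ b, t.IsTrunkEnd b → ∀ c ∈ t.children b, (t.subtreeAt c).Stable

/-- Pruning `t` from `v`: delete all strict descendants of `v` and add their
weights to the weight of `v`. -/
def prune (t : PreTree) (v : ℕ) : PreTree where
  verts := t.verts.filter fun u => ¬ t.SAnc v u
  root := t.root
  parent := t.parent
  wt := fun u =>
    if u = v then t.wt v + ∑ x ∈ t.verts.filter (fun x => t.SAnc v x), t.wt x
    else t.wt u

/-- Normalization: repeatedly prune from positively weighted non-terminal vertices
until every positive vertex is terminal.  In closed form: keep exactly the vertices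
with no positively weighted strict ancestor; a kept ghost vertex keeps weight `0`,
while a kept positive vertex absorbs the weights of all of its descendants. -/
def normalize (t : PreTree) : PreTree where
  verts := t.verts.filter fun u => ∀ p, t.SAnc p u → t.wt p = 0
  root := t.root
  parent := t.parent
  wt := fun u =>
    if t.wt u = 0 then 0 else ∑ x ∈ t.verts.filter (fun x => t.Anc u x), t.wt x

/-- Collapsing a (non-root) vertex `v`: merge `v` into its direct ascendant (the
merged vertex carries the sum of the two weights, the children of `v` become
children of the merged vertex), then normalize. -/
def collapse (t : PreTree) (v : ℕ) : PreTree :=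
  normalize
    { verts := t.verts.erase v
      root := t.root
      parent := fun u => if t.parent u = v then t.parent v else t.parent u
      wt := fun u => if u = t.parent v then t.wt (t.parent v) + t.wt v else t.wt u }

/-- Advancing a (non-root) vertex `v`: every direct descendant `u ≠ v` of the direct
ascendant of `v` is re-attached to `v`, then normalize. -/
def advance (t : PreTree) (v : ℕ) : PreTree :=
  normalize
    { verts := t.verts
      root := t.root
      parent := fun u =>
        if t.parent u = t.parent v ∧ u ≠ t.parent v ∧ u ≠ v then v else t.parent u
      wt := t.wt }

/-- The monoidal transforms of `t`: the advancings of the direct descendants of the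
branch vertex. -/
def Mon (t : PreTree) : Set PreTree :=
  {s | ∃ b v, t.IsBranchVertex b ∧ v ∈ t.children b ∧ s = t.advance v}

/-- Isomorphism of weighted rooted trees. -/
def Iso (s t : PreTree) : Prop :=
  ∃ f : ℕ → ℕ, Set.BijOn f (s.verts : Set ℕ) (t.verts : Set ℕ) ∧ f s.root = t.root ∧
    (∀ v ∈ s.verts, f (s.parent v) = t.parent (f v)) ∧
    ∀ v ∈ s.verts, t.wt (f v) = s.wt v

/-- `Λ_d`: stable terminally weighted rooted trees of total weight `d`. -/
def Lambda (d : ℕ) : Set PreTree :=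
  {t | t.IsTree ∧ t.Stable ∧ t.TerminallyWeighted ∧ t.totalWeight = d}

/-- `Λ_{d,[k]}`, defined inductively: `Λ_{d,[1]} = Λ_d` and for `k ≥ 2`,
`Λ_{d,[k]} = {γ ∈ Λ_{d,[k−1]} : br γ ≥ k+1} ∪ {γ ∈ Mon γ' : γ' ∈ Λ_{d,[k−1]}, br γ' = k}`. -/
def LambdaK (d : ℕ) : ℕ → Set PreTree
  | 0 => Lambda d
  | 1 => Lambda d
  | k + 2 =>
      {t | t ∈ LambdaK d (k + 1) ∧ k + 3 ≤ t.br} ∪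
        {t | ∃ t' ∈ LambdaK d (k + 1), t'.br = k + 2 ∧ t ∈ t'.Mon}

/-- Condition (†): every non-terminal direct descendant of the branch vertex has at
least two direct descendants. -/
def Dagger (t : PreTree) : Prop :=
  ∀ b v, t.IsBranchVertex b → v ∈ t.children b → t.children v ≠ ∅ →
    2 ≤ (t.children v).card

/-- `z_{[b,o]} = ∏_{b ⪰ a ≻ o} z_a`, the product of the variables `z_a` over all
non-root vertices `a` on the path from the root to `b` (including `a = b`).
The variable `z_a` is `X (Sum.inl a)`; the variable `w_b` is `X (Sum.inr b)`. -/
def zpath (R : Type) [CommRing R] (t : PreTree) (b : ℕ) : MvPolynomial (ℕ ⊕ ℕ) R :=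
  ∏ a ∈ t.verts.filter (fun a => t.Anc a b ∧ a ≠ t.root), MvPolynomial.X (Sum.inl a)

/-- `Φ_γ = ∑_{b terminal} z_{[b,o]} · w_b`. -/
def Phi (R : Type) [CommRing R] (t : PreTree) : MvPolynomial (ℕ ⊕ ℕ) R :=
  ∑ b ∈ t.verts.filter (fun b => t.children b = ∅),
    zpath R t b * MvPolynomial.X (Sum.inr b)

end PreTree

/-!
Along the induction a tree of `Λ_{d,[k]}` with branches stays a terminally weighted tree of
total weight `d` that is stable below its trunk end. Then `br ≤ d`, since distinct children of a
vertex have disjoint sets of terminal descendants, each of positive weight. Advancing a positive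
child `v` of the branch vertex moves every other branch below `v`, where normalization prunes it:
a path tree is left. Advancing a ghost child `v`, which has at least two children by stability,
makes `v` the new branch vertex with `br - 1 + #children(v) > br` branches; normalization does
nothing to a terminally weighted tree, so the invariant survives.
-/

namespace PreTree

variable {t s : PreTree} {d u v w x y p e : ℕ}

@[simp] lemma mem_children : x ∈ t.children u ↔ x ∈ t.verts ∧ t.parent x = u ∧ x ≠ u :=
  Finset.mem_filter

lemma disjoint_children (h : u ≠ w) : Disjoint (t.children u) (t.children w) :=
  Finset.disjoint_left.2 fun _ hu hw =>
    h ((mem_children.1 hu).2.1.symm.trans (mem_children.1 hw).2.1)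

lemma anc_refl (t : PreTree) (u : ℕ) : t.Anc u u := ⟨0, rfl⟩

lemma anc_of_parent_eq (h : t.parent x = u) : t.Anc u x := ⟨1, h⟩

lemma anc_parent (t : PreTree) (x : ℕ) : t.Anc (t.parent x) x := anc_of_parent_eq rfl

lemma Anc.trans (huv : t.Anc u v) (hvw : t.Anc v w) : t.Anc u w := by
  obtain ⟨a, rfl⟩ := huv
  obtain ⟨b, rfl⟩ := hvw
  exact ⟨a + b, Function.iterate_add_apply _ _ _ _⟩

lemma Anc.total (hu : t.Anc u x) (hv : t.Anc v x) : t.Anc u v ∨ t.Anc v u := by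
  obtain ⟨a, rfl⟩ := hu
  obtain ⟨b, rfl⟩ := hv
  rcases le_total a b with h | h
  · exact Or.inr ⟨b - a, by rw [← Function.iterate_add_apply, Nat.sub_add_cancel h]⟩
  · exact Or.inl ⟨a - b, by rw [← Function.iterate_add_apply, Nat.sub_add_cancel h]⟩

lemma SAnc.anc_parent (h : t.SAnc u x) : t.Anc u (t.parent x) := by
  obtain ⟨⟨n, hn⟩, hne⟩ := h
  cases n with
  | zero => exact absurd hn hne.symm
  | succ n => exact ⟨n, by rwa [Function.iterate_succ_apply] at hn⟩

lemma IsTree.parent_mem (ht : t.IsTree) (hx : x ∈ t.verts) : t.parent x ∈ t.verts := ht.2.1 x hx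

lemma IsTree.mem_of_anc (ht : t.IsTree) (hx : x ∈ t.verts) (h : t.Anc u x) : u ∈ t.verts := by
  obtain ⟨n, rfl⟩ := h
  induction n with
  | zero => exact hx
  | succ n ih => rw [Function.iterate_succ_apply']; exact ht.parent_mem ih

lemma IsTree.anc_root (ht : t.IsTree) (hx : x ∈ t.verts) : t.Anc t.root x := ht.2.2.2 x hx

lemma IsTree.iterate_root (ht : t.IsTree) (n : ℕ) : t.parent^[n] t.root = t.root :=
  Function.iterate_fixed ht.2.2.1 n

lemma IsTree.eq_root_of_anc_root (ht : t.IsTree) (h : t.Anc u t.root) : u = t.root := by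
  obtain ⟨n, rfl⟩ := h
  exact ht.iterate_root n

lemma IsTree.eq_root_of_parent_eq (ht : t.IsTree) (hx : x ∈ t.verts) (h : t.parent x = x) :
    x = t.root := by
  obtain ⟨n, hn⟩ := ht.anc_root hx
  rwa [Function.iterate_fixed h] at hn

lemma IsTree.anc_antisymm (ht : t.IsTree) (hv : v ∈ t.verts) (huv : t.Anc u v)
    (hvu : t.Anc v u) : u = v := by
  obtain ⟨a, rfl⟩ := huv
  obtain ⟨b, hb⟩ := hvu
  rcases Nat.eq_zero_or_pos a with rfl | ha
  · rfl
  obtain ⟨m, hm⟩ := ht.anc_root hv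
  have hper : Function.IsPeriodicPt t.parent (b + a) v := by
    rw [Function.IsPeriodicPt, Function.IsFixedPt, Function.iterate_add_apply, hb]
  -- `v` is periodic under `parent`, yet some iterate of it is the fixed root
  have hroot : v = t.root := by
    have hcycle : t.parent^[(b + a) * m] v = v := hper.mul_const m
    rwa [← Nat.sub_add_cancel (Nat.le_mul_of_pos_left m (by omega : 0 < b + a)),
      Function.iterate_add_apply, hm, ht.iterate_root, eq_comm] at hcycle
  rw [hroot, ht.iterate_root]

theorem IsTree.induction (ht : t.IsTree) {P : ℕ → Prop} (root : P t.root)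
    (step : ∀ x ∈ t.verts, x ≠ t.root → P (t.parent x) → P x) :
    ∀ x ∈ t.verts, P x := by
  intro x hx
  obtain ⟨n, hn⟩ := ht.anc_root hx
  induction n generalizing x with
  | zero => exact (show x = t.root from hn) ▸ root
  | succ n ih =>
    by_cases hxr : x = t.root
    · exact hxr ▸ root
    · exact step x hx hxr (ih _ (ht.parent_mem hx) (by rwa [Function.iterate_succ_apply] at hn))

lemma IsTree.exists_child_anc (ht : t.IsTree) (hx : x ∈ t.verts) (h : t.SAnc u x) :
    ∃ c ∈ t.children u, t.Anc c x := by
  obtain ⟨⟨n, hn⟩, hne⟩ := h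
  induction n generalizing x with
  | zero => exact absurd hn hne.symm
  | succ n ih =>
    rw [Function.iterate_succ_apply] at hn
    by_cases hpu : t.parent x = u
    · exact ⟨x, mem_children.2 ⟨hx, hpu, hne.symm⟩, t.anc_refl x⟩
    · obtain ⟨c, hc, hcx⟩ := ih (ht.parent_mem hx) (Ne.symm hpu) hn
      exact ⟨c, hc, hcx.trans (t.anc_parent x)⟩

lemma IsTree.eq_of_mem_children_of_anc (ht : t.IsTree) (hc : x ∈ t.children u)
    (hc' : y ∈ t.children u) (h : t.Anc x y) : x = y := by
  obtain ⟨hxm, hxu, hxne⟩ := mem_children.1 hc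
  obtain ⟨-, hyu, -⟩ := mem_children.1 hc'
  by_contra hne
  have hxu' : t.Anc x u := hyu ▸ SAnc.anc_parent ⟨h, hne⟩
  exact hxne (ht.anc_antisymm (ht.mem_of_anc hxm (anc_of_parent_eq hxu)) hxu'
    (anc_of_parent_eq hxu))

lemma IsTree.exists_terminal_anc (ht : t.IsTree) (hx : x ∈ t.verts) :
    ∃ y ∈ t.verts, t.Anc x y ∧ t.children y = ∅ := by
  obtain ⟨y, hy, hmin⟩ := (t.verts.filter (t.Anc x)).exists_min_image
    (fun y => (t.verts.filter (t.Anc y)).card) ⟨x, Finset.mem_filter.2 ⟨hx, t.anc_refl x⟩⟩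
  rw [Finset.mem_filter] at hy
  refine ⟨y, hy.1, hy.2, Finset.eq_empty_of_forall_notMem fun c hc => ?_⟩
  obtain ⟨hcm, hcy, hcne⟩ := mem_children.1 hc
  have hyc : t.Anc y c := anc_of_parent_eq hcy
  have hsub : t.verts.filter (t.Anc c) ⊂ t.verts.filter (t.Anc y) := by
    refine (Finset.ssubset_iff_of_subset fun z hz => ?_).2 ⟨y, ?_, fun hy' => ?_⟩
    · rw [Finset.mem_filter] at hz ⊢
      exact ⟨hz.1, hyc.trans hz.2⟩
    · exact Finset.mem_filter.2 ⟨hy.1, t.anc_refl y⟩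
    · exact hcne (ht.anc_antisymm hy.1 (Finset.mem_filter.1 hy').2 hyc)
  exact (hmin c (Finset.mem_filter.2 ⟨hcm, hy.2.trans hyc⟩)).not_gt (Finset.card_lt_card hsub)

lemma TerminallyWeighted.wt_eq_zero_iff (htw : t.TerminallyWeighted) (hu : u ∈ t.verts) :
    t.wt u = 0 ↔ (t.children u).Nonempty := by
  rw [Finset.nonempty_iff_ne_empty, Ne, ← htw u hu, not_lt, Nat.le_zero]

lemma TerminallyWeighted.wt_eq_zero_of_sanc (htw : t.TerminallyWeighted) (ht : t.IsTree)
    (hx : x ∈ t.verts) (h : t.SAnc u x) : t.wt u = 0 := by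
  obtain ⟨c, hc, -⟩ := ht.exists_child_anc hx h
  exact (htw.wt_eq_zero_iff (ht.mem_of_anc hx h.1)).2 ⟨c, hc⟩

lemma card_children_le_totalWeight (ht : t.IsTree) (htw : t.TerminallyWeighted) (u : ℕ) :
    (t.children u).card ≤ t.totalWeight := by
  set T := t.verts.filter fun y => t.children y = ∅
  choose! f hfm hfanc hfT using fun c (hc : c ∈ t.children u) =>
    ht.exists_terminal_anc (mem_children.1 hc).1
  have hinj : Set.InjOn f (t.children u) := by
    intro c hc c' hc' hf
    rcases (hfanc c hc).total (hf ▸ hfanc c' hc') with h | h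
    · exact ht.eq_of_mem_children_of_anc hc hc' h
    · exact (ht.eq_of_mem_children_of_anc hc' hc h).symm
  calc (t.children u).card ≤ T.card :=
        Finset.card_le_card_of_injOn f
          (fun c hc => Finset.mem_filter.2 ⟨hfm c hc, hfT c hc⟩) hinj
    _ = ∑ _y ∈ T, 1 := by simp
    _ ≤ ∑ y ∈ T, t.wt y := Finset.sum_le_sum fun y hy =>
        (htw y (Finset.mem_filter.1 hy).1).2 (Finset.mem_filter.1 hy).2
    _ ≤ t.totalWeight := Finset.sum_le_sum_of_subset (Finset.filter_subset _ _)

lemma IsTrunkEnd.anc_or_sanc (he : t.IsTrunkEnd e) (ht : t.IsTree) :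
    ∀ x ∈ t.verts, t.Anc x e ∨ t.SAnc e x := by
  refine ht.induction (Or.inl (ht.anc_root he.1)) fun x hx hxr ih => ?_
  have hxp : x ≠ t.parent x := fun h => hxr (ht.eq_root_of_parent_eq hx h.symm)
  rcases ih with hpe | hep
  · by_cases h : t.parent x = e
    · exact Or.inr ⟨anc_of_parent_eq h, fun hex => hxp (hex ▸ h).symm⟩
    · -- the trunk vertex `t.parent x` has a single child, which must lead to `e`
      obtain ⟨c, hc, hce⟩ := ht.exists_child_anc he.1 ⟨hpe, h⟩
      have hx' : x ∈ t.children (t.parent x) := mem_children.2 ⟨hx, rfl, hxp⟩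
      rw [Finset.card_le_one.1 (he.2.2 _ ⟨hpe, h⟩).le x hx' c hc]
      exact Or.inl hce
  · refine Or.inr ⟨hep.1.trans (t.anc_parent x), fun hex => hep.2 ?_⟩
    subst hex
    exact ht.anc_antisymm (ht.parent_mem hx) hep.1 (t.anc_parent e)

lemma IsTree.trunkEnd_unique (ht : t.IsTree) (he : t.IsTrunkEnd e) (he' : t.IsTrunkEnd u) :
    u = e := by
  rcases he.anc_or_sanc ht u he'.1 with h | h
  · by_contra hne
    exact he'.2.1 (he.2.2 u ⟨h, hne⟩)
  · exact absurd (he'.2.2 e h) he.2.1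

lemma IsTrunkEnd.br_eq (he : t.IsTrunkEnd e) (ht : t.IsTree) : t.br = (t.children e).card := by
  refine Finset.sum_eq_single_of_mem e (Finset.mem_filter.2 ⟨he.1, he⟩) fun b hb hbe => ?_
  exact absurd (ht.trunkEnd_unique he (Finset.mem_filter.1 hb).2) hbe

lemma IsTree.br_eq_zero_or_exists (ht : t.IsTree) :
    t.br = 0 ∨ ∃ e, t.IsTrunkEnd e ∧ t.br = (t.children e).card := by
  rcases (t.verts.filter t.IsTrunkEnd).eq_empty_or_nonempty with h | ⟨e, he⟩
  · exact Or.inl (by rw [br, h, Finset.sum_empty])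
  · exact Or.inr ⟨e, (Finset.mem_filter.1 he).2, (Finset.mem_filter.1 he).2.br_eq ht⟩

lemma br_eq_zero_of_card_children_le_one (h : ∀ u ∈ t.verts, (t.children u).card ≤ 1) :
    t.br = 0 :=
  Finset.sum_eq_zero fun b hb => by
    have := (Finset.mem_filter.1 hb).2.2.1
    have := h b (Finset.mem_filter.1 hb).1
    omega

def attachSiblings (t : PreTree) (v : ℕ) : PreTree where
  verts := t.verts
  root := t.root
  parent := fun u =>
    if t.parent u = t.parent v ∧ u ≠ t.parent v ∧ u ≠ v then v else t.parent u
  wt := t.wt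

lemma advance_eq_normalize (t : PreTree) (v : ℕ) :
    t.advance v = (t.attachSiblings v).normalize := rfl

lemma attachSiblings_parent_of_ne (hx : t.parent x ≠ t.parent v) :
    (t.attachSiblings v).parent x = t.parent x :=
  if_neg fun h => hx h.1

lemma attachSiblings_parent_of_sibling (hx : t.parent x = t.parent v) (hxp : x ≠ t.parent v)
    (hxv : x ≠ v) : (t.attachSiblings v).parent x = v :=
  if_pos ⟨hx, hxp, hxv⟩

lemma attachSiblings_parent_self : (t.attachSiblings v).parent v = t.parent v :=
  if_neg fun h => h.2.2 rfl

lemma attachSiblings_parent_of_anc (ht : t.IsTree) (hv : v ∈ t.verts)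
    (hy : t.Anc y (t.parent v)) : (t.attachSiblings v).parent y = t.parent y :=
  if_neg fun ⟨hyp, hyne, _⟩ =>
    hyne (ht.anc_antisymm (ht.parent_mem hv) hy (anc_of_parent_eq hyp))

lemma attachSiblings_anc_iff (ht : t.IsTree) (hv : v ∈ t.verts) (hy : t.Anc y (t.parent v)) :
    (t.attachSiblings v).Anc p y ↔ t.Anc p y := by
  have hiter : ∀ n, (t.attachSiblings v).parent^[n] y = t.parent^[n] y := by
    intro n
    induction n with
    | zero => rfl
    | succ n ih =>
      rw [Function.iterate_succ_apply', Function.iterate_succ_apply', ih]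
      exact attachSiblings_parent_of_anc ht hv (Anc.trans ⟨n, rfl⟩ hy)
  simp only [Anc, hiter]

lemma attachSiblings_anc_of_sanc (ht : t.IsTree) :
    ∀ x ∈ t.verts, t.SAnc (t.parent v) x → (t.attachSiblings v).Anc v x := by
  refine ht.induction (fun h => absurd (ht.eq_root_of_anc_root h.1) h.2) fun x _ _ ih hsx => ?_
  by_cases hpx : t.parent x = t.parent v
  · by_cases hxv : x = v
    · exact hxv ▸ anc_refl _ _
    · exact anc_of_parent_eq (attachSiblings_parent_of_sibling hpx (Ne.symm hsx.2) hxv)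
  · exact (ih ⟨hsx.anc_parent, fun h => hpx h.symm⟩).trans
      (anc_of_parent_eq (attachSiblings_parent_of_ne hpx))

lemma IsTree.attachSiblings (ht : t.IsTree) (hv : v ∈ t.verts) :
    (t.attachSiblings v).IsTree := by
  refine ⟨ht.1, fun x hx => ?_, ?_, ?_⟩
  · show (if _ then v else t.parent x) ∈ t.verts
    split_ifs
    exacts [hv, ht.parent_mem hx]
  · exact (attachSiblings_parent_of_anc ht hv (ht.anc_root (ht.parent_mem hv))).trans ht.2.2.1
  · refine ht.induction ((t.attachSiblings v).anc_refl _) fun x _ _ ih => ?_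
    by_cases hx : t.parent x = t.parent v ∧ x ≠ t.parent v ∧ x ≠ v
    · rw [hx.1] at ih
      exact (ih.trans (anc_of_parent_eq attachSiblings_parent_self)).trans
        (anc_of_parent_eq (attachSiblings_parent_of_sibling hx.1 hx.2.1 hx.2.2))
    · exact ih.trans (anc_of_parent_eq (if_neg hx))

lemma children_attachSiblings_parent (hv : v ∈ t.children (t.parent v)) :
    (t.attachSiblings v).children (t.parent v) = {v} := by
  ext x
  simp only [mem_children, attachSiblings, Finset.mem_singleton] at hv ⊢
  split_ifs with h <;> grind

lemma children_attachSiblings_self (hv : v ∈ t.children (t.parent v)) :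
    (t.attachSiblings v).children v = (t.children (t.parent v)).erase v ∪ t.children v := by
  ext x
  simp only [mem_children, attachSiblings, Finset.mem_union, Finset.mem_erase] at hv ⊢
  split_ifs with h <;> grind

lemma children_attachSiblings_of_ne (hue : u ≠ t.parent v) (huv : u ≠ v) :
    (t.attachSiblings v).children u = t.children u := by
  ext x
  simp only [mem_children, attachSiblings]
  split_ifs with h <;> grind

lemma card_children_attachSiblings_self (hv : v ∈ t.children (t.parent v)) :
    ((t.attachSiblings v).children v).card =
      (t.children (t.parent v)).card - 1 + (t.children v).card := by
  rw [children_attachSiblings_self hv, Finset.card_union_of_disjoint, Finset.card_erase_of_mem hv]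
  exact (disjoint_children (mem_children.1 hv).2.2.symm).mono_left (Finset.erase_subset _ _)

lemma IsTrunkEnd.attachSiblings (he : t.IsTrunkEnd (t.parent v)) (ht : t.IsTree)
    (hv : v ∈ t.children (t.parent v)) (hv2 : 2 ≤ (t.children v).card) :
    (t.attachSiblings v).IsTrunkEnd v := by
  obtain ⟨hvm, -, hvne⟩ := mem_children.1 hv
  refine ⟨hvm, ?_, fun p hp => ?_⟩
  · have := Finset.card_le_card (children_attachSiblings_self hv ▸ Finset.subset_union_right)
    omega
  · have hpv := hp.anc_parent
    rw [attachSiblings_parent_self, attachSiblings_anc_iff ht hvm (t.anc_refl _)] at hpv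
    by_cases h : p = t.parent v
    · rw [h, children_attachSiblings_parent hv, Finset.card_singleton]
    · have hpv' : p ≠ v := fun hpv' =>
        hvne (ht.anc_antisymm (ht.parent_mem hvm) (hpv' ▸ hpv) (t.anc_parent v))
      rw [children_attachSiblings_of_ne h hpv']
      exact he.2.2 p ⟨hpv, h⟩

def StableBelow (t : PreTree) (e : ℕ) : Prop :=
  ∀ u ∈ t.verts, t.SAnc e u → t.wt u = 0 → 2 ≤ (t.children u).card

lemma StableBelow.attachSiblings (hst : t.StableBelow (t.parent v))
    (he : t.IsTrunkEnd (t.parent v)) (ht : t.IsTree) (hv : v ∈ t.children (t.parent v)) :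
    (t.attachSiblings v).StableBelow v := by
  obtain ⟨hvm, -, hvne⟩ := mem_children.1 hv
  intro u hu hvu hwu
  have heu : t.SAnc (t.parent v) u := by
    refine (he.anc_or_sanc ht u hu).resolve_left fun hue => hvne ?_
    have hvu' := (attachSiblings_anc_iff ht hvm hue).1 hvu.1
    exact ht.anc_antisymm (ht.parent_mem hvm) (hvu'.trans hue) (t.anc_parent v)
  rw [children_attachSiblings_of_ne (Ne.symm heu.2) (Ne.symm hvu.2)]
  exact hst u hu heu hwu

lemma TerminallyWeighted.attachSiblings (htw : t.TerminallyWeighted)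
    (hv : v ∈ t.children (t.parent v)) (hwv : t.wt v = 0) :
    (t.attachSiblings v).TerminallyWeighted := by
  obtain ⟨hvm, -, -⟩ := mem_children.1 hv
  intro u hu
  show 0 < t.wt u ↔ _
  by_cases hue : u = t.parent v
  · have hwu : t.wt u = 0 := (htw.wt_eq_zero_iff hu).2 (hue ▸ ⟨v, hv⟩)
    rw [hue, children_attachSiblings_parent hv, ← hue, hwu]
    simp
  by_cases huv : u = v
  · obtain ⟨c, hc⟩ := (htw.wt_eq_zero_iff hvm).1 hwv
    rw [huv, children_attachSiblings_self hv, hwv]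
    simp [Finset.ne_empty_of_mem hc]
  · rw [children_attachSiblings_of_ne hue huv]
    exact htw u hu

structure StableBelowTrunk (d : ℕ) (t : PreTree) : Prop where
  isTree : t.IsTree
  terminallyWeighted : t.TerminallyWeighted
  totalWeight_eq : t.totalWeight = d
  stableBelow : ∀ e, t.IsTrunkEnd e → t.StableBelow e

lemma StableBelowTrunk.of_mem_lambda (h : t ∈ Lambda d) : StableBelowTrunk d t where
  isTree := h.1
  terminallyWeighted := h.2.2.1
  totalWeight_eq := h.2.2.2
  stableBelow _ _ u hu hsu := h.2.1 u hu fun hur =>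
    hsu.2 ((h.1.eq_root_of_anc_root (hur ▸ hsu.1)).trans hur.symm)

lemma StableBelowTrunk.br_le (h : StableBelowTrunk d t) : t.br ≤ d := by
  rcases h.isTree.br_eq_zero_or_exists with h0 | ⟨e, -, he⟩
  · omega
  · rw [he, ← h.totalWeight_eq]
    exact card_children_le_totalWeight h.isTree h.terminallyWeighted e

lemma StableBelowTrunk.attachSiblings (h : StableBelowTrunk d t)
    (he : t.IsTrunkEnd (t.parent v)) (hv : v ∈ t.children (t.parent v)) (hwv : t.wt v = 0) :
    StableBelowTrunk d (t.attachSiblings v) ∧ t.br < (t.attachSiblings v).br := by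
  obtain ⟨hvm, -, hvne⟩ := mem_children.1 hv
  have hv2 : 2 ≤ (t.children v).card :=
    h.stableBelow _ he v hvm ⟨t.anc_parent v, Ne.symm hvne⟩ hwv
  have hte := he.attachSiblings h.isTree hv hv2
  have ht := h.isTree.attachSiblings hvm
  refine ⟨⟨ht, h.terminallyWeighted.attachSiblings hv hwv, h.totalWeight_eq, fun e he' => ?_⟩,
    ?_⟩
  · rw [ht.trunkEnd_unique hte he']
    exact (h.stableBelow _ he).attachSiblings he h.isTree hv
  · have := Finset.card_pos.2 ⟨v, hv⟩
    rw [hte.br_eq ht, card_children_attachSiblings_self hv, he.br_eq h.isTree]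
    omega

lemma normalize_eq_of_terminallyWeighted (ht : s.IsTree) (htw : s.TerminallyWeighted) :
    ∃ w : ℕ → ℕ, s.normalize = { s with wt := w } ∧ ∀ u ∈ s.verts, w u = s.wt u := by
  refine ⟨s.normalize.wt, ?_, fun u hu => ?_⟩
  · have hverts : s.verts.filter (fun u => ∀ p, s.SAnc p u → s.wt p = 0) = s.verts :=
      Finset.filter_true_of_mem fun u hu p hp => htw.wt_eq_zero_of_sanc ht hu hp
    show PreTree.mk _ _ _ _ = PreTree.mk _ _ _ _
    rw [hverts]
    rfl
  · show (if s.wt u = 0 then 0 else _) = s.wt u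
    split_ifs with h0
    · exact h0.symm
    -- a positive vertex is terminal, so it is its own only descendant
    have hdesc : s.verts.filter (s.Anc u) = {u} := by
      refine Finset.eq_singleton_iff_unique_mem.2
        ⟨Finset.mem_filter.2 ⟨hu, s.anc_refl u⟩, fun x hx => ?_⟩
      by_contra hxu
      rw [Finset.mem_filter] at hx
      exact h0 (htw.wt_eq_zero_of_sanc ht hx.1 ⟨hx.2, Ne.symm hxu⟩)
    rw [hdesc, Finset.sum_singleton]

lemma StableBelowTrunk.normalize (h : StableBelowTrunk d s) :
    StableBelowTrunk d s.normalize ∧ s.normalize.br = s.br := by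
  obtain ⟨w, hnorm, hw⟩ := normalize_eq_of_terminallyWeighted h.isTree h.terminallyWeighted
  rw [hnorm]
  refine ⟨⟨h.isTree, fun u hu => ?_, ?_, fun e he u hu hsu hwu => ?_⟩, rfl⟩
  · show 0 < w u ↔ s.children u = ∅
    rw [hw u hu]
    exact h.terminallyWeighted u hu
  · exact (Finset.sum_congr rfl hw).trans h.totalWeight_eq
  · exact h.stableBelow e he u hu hsu ((hw u hu).symm.trans hwu)

lemma br_advance_eq_zero (ht : t.IsTree) (he : t.IsTrunkEnd (t.parent v))
    (hv : v ∈ t.children (t.parent v)) (hwv : t.wt v ≠ 0) : (t.advance v).br = 0 := by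
  have hkept : ∀ x ∈ (t.advance v).verts, ¬ (t.attachSiblings v).SAnc v x :=
    fun x hx hvx => hwv ((Finset.mem_filter.1 hx).2 v hvx)
  refine br_eq_zero_of_card_children_le_one fun u hu => ?_
  have hum : u ∈ t.verts := (Finset.mem_filter.1 hu).1
  by_cases huv : u = v
  · subst huv
    rw [Finset.eq_empty_of_forall_notMem fun x hx => hkept x (mem_children.1 hx).1
      ⟨anc_of_parent_eq (mem_children.1 hx).2.1, (mem_children.1 hx).2.2.symm⟩]
    simp
  have hue : t.Anc u (t.parent v) := (he.anc_or_sanc ht u hum).resolve_right fun h =>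
    hkept u hu ⟨attachSiblings_anc_of_sanc ht u hum h, Ne.symm huv⟩
  refine (Finset.card_le_card (Finset.filter_subset_filter _ (Finset.filter_subset _ _))).trans
    (?_ : ((t.attachSiblings v).children u).card ≤ 1)
  by_cases h : u = t.parent v
  · rw [h, children_attachSiblings_parent hv, Finset.card_singleton]
  · rw [children_attachSiblings_of_ne h huv, he.2.2 u ⟨hue, h⟩]

lemma StableBelowTrunk.br_of_mem_mon (h : StableBelowTrunk d t) (hs : s ∈ t.Mon) :
    s.br = 0 ∨ (StableBelowTrunk d s ∧ t.br < s.br) := by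
  obtain ⟨b, v, ⟨hb, -⟩, hv, rfl⟩ := hs
  obtain ⟨-, rfl, -⟩ := mem_children.1 hv
  by_cases hwv : t.wt v = 0
  · rw [advance_eq_normalize]
    obtain ⟨hs, hlt⟩ := h.attachSiblings hb hv hwv
    obtain ⟨hsn, hbr⟩ := hs.normalize
    exact Or.inr ⟨hsn, hbr ▸ hlt⟩
  · exact Or.inl (br_advance_eq_zero h.isTree hb hv hwv)

lemma br_eq_zero_or_of_mem_lambda (h : t ∈ Lambda d) :
    t.br = 0 ∨ (StableBelowTrunk d t ∧ 2 ≤ t.br) := by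
  have hs := StableBelowTrunk.of_mem_lambda h
  have h1 : t.br ≠ 1 := by
    rcases hs.isTree.br_eq_zero_or_exists with h0 | ⟨e, he, hbr⟩
    · omega
    · exact hbr ▸ he.2.1
  by_cases h0 : t.br = 0
  · exact Or.inl h0
  · exact Or.inr ⟨hs, by omega⟩

theorem br_eq_zero_or_of_mem_lambdaK :
    ∀ k, ∀ t ∈ LambdaK d k, t.br = 0 ∨ (StableBelowTrunk d t ∧ k + 1 ≤ t.br)
  | 0, _, h => (br_eq_zero_or_of_mem_lambda h).imp_right fun h => ⟨h.1, by omega⟩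
  | 1, _, h => br_eq_zero_or_of_mem_lambda h
  | k + 2, t, h => by
    rcases h with ⟨hk, hbr⟩ | ⟨t', ht', hbr', hmon⟩
    · exact (br_eq_zero_or_of_mem_lambdaK (k + 1) t hk).imp_right fun h => ⟨h.1, hbr⟩
    · rcases br_eq_zero_or_of_mem_lambdaK (k + 1) t' ht' with h0 | ⟨h', -⟩
      · omega
      · exact (h'.br_of_mem_mon hmon).imp_right fun h => ⟨h.1, by omega⟩

end PreTree

theorem lambdaK_br_bounds_general (d k : ℕ) :
    ∀ t ∈ PreTree.LambdaK d k, t.br = 0 ∨ (k + 1 ≤ t.br ∧ t.br ≤ d) := by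
  intro t ht
  exact (PreTree.br_eq_zero_or_of_mem_lambdaK k t ht).imp_right fun h => ⟨h.2, h.1.br_le⟩

/-- for `1 ≤ k ≤ d`, every `γ ∈ Λ_{d,[k]}` satisfies `br γ = 0` or
`k + 1 ≤ br γ ≤ d`. -/
theorem lambdaK_br_bounds (d k : ℕ) (hd : 0 < d) (hk1 : 1 ≤ k) (hkd : k ≤ d) :
    ∀ t ∈ PreTree.LambdaK d k, t.br = 0 ∨ (k + 1 ≤ t.br ∧ t.br ≤ d) :=
  lambdaK_br_bounds_general d k
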